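/- Let m ≥ 1 be an integer, p ∈ (0,1) and q ∈ [0, 1/2). Let K ~ Binomial(m, p), and conditionally on K let X ~ Binomial(K, q). Then P(X ≥ K/2) ≤ exp(−(1−2q)²·m·p / (2·(4q+2))) + exp(−m·p/8). -/
import Mathlib

/-- The probability mass function of the Binomial(n, p) distribution at `k`. -/
noncomputable def binomPMF (n : ℕ) (p : ℝ) (k : ℕ) : ℝ :=
  (n.choose k : ℝ) * p ^ k * (1 - p) ^ (n - k)

open Finset Real

lemma binomPMF_nonneg {n k : ℕ} {a : ℝ} (h0 : 0 ≤ a) (h1 : a ≤ 1) :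
    0 ≤ binomPMF n a k := by
  unfold binomPMF
  have : (0:ℝ) ≤ 1 - a := by linarith
  positivity

lemma sum_binomPMF (n : ℕ) (a : ℝ) : ∑ k ∈ range (n+1), binomPMF n a k = 1 := by
  unfold binomPMF
  have h := add_pow a (1-a) n
  have : ∑ k ∈ range (n+1), (n.choose k : ℝ) * a ^ k * (1 - a) ^ (n - k)
      = ∑ k ∈ range (n+1), a ^ k * (1-a) ^ (n - k) * (n.choose k : ℝ) := by
    apply Finset.sum_congr rfl; intro k _; ring
  rw [this, ← h]
  norm_num

lemma term_bound {k j : ℕ} (hjk : j ≤ k) (h2 : k ≤ 2*j) (hk : 1 ≤ k)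
    {q : ℝ} (hq0 : 0 ≤ q) (hq : q < 1/2) :
    q^j * (1-q)^(k-j) ≤ (q*(1-q)) ^ ((k:ℝ)/2) := by
  rcases eq_or_lt_of_le hq0 with h0 | h0
  · -- q = 0
    have hj : 1 ≤ j := by omega
    rw [← h0]
    simp [zero_pow (by omega : j ≠ 0)]
    positivity
  · have h1q : 0 < 1 - q := by linarith
    have hkj : ((k - j : ℕ) : ℝ) = (k:ℝ) - (j:ℝ) := by
      rw [Nat.cast_sub hjk]
    rw [← Real.rpow_natCast q j, ← Real.rpow_natCast (1-q) (k-j), hkj]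
    rw [Real.rpow_def_of_pos h0, Real.rpow_def_of_pos h1q,
        Real.rpow_def_of_pos (by positivity : (0:ℝ) < q*(1-q)), ← Real.exp_add,
        Real.log_mul (ne_of_gt h0) (ne_of_gt h1q)]
    apply Real.exp_le_exp.mpr
    have hlog : Real.log q ≤ Real.log (1-q) :=
      Real.log_le_log h0 (by linarith)
    have hjhalf : (k:ℝ)/2 ≤ (j:ℝ) := by
      have : (k:ℝ) ≤ 2*(j:ℝ) := by exact_mod_cast h2
      linarith
    nlinarith [hjhalf, hlog]

lemma inner_bound {k : ℕ} (hk : 1 ≤ k) {q : ℝ} (hq0 : 0 ≤ q) (hq : q < 1/2) :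
    ∑ j ∈ (Finset.range (k+1)).filter (fun j => k ≤ 2*j), binomPMF k q j
      ≤ (4*q*(1-q)) ^ ((k:ℝ)/2) := by
  have h1q : (0:ℝ) ≤ 1 - q := by linarith
  have step1 : ∑ j ∈ (Finset.range (k+1)).filter (fun j => k ≤ 2*j), binomPMF k q j
      ≤ ∑ j ∈ (Finset.range (k+1)).filter (fun j => k ≤ 2*j),
          (k.choose j : ℝ) * (q*(1-q)) ^ ((k:ℝ)/2) := by
    apply Finset.sum_le_sum
    intro j hj
    simp only [Finset.mem_filter, Finset.mem_range] at hj
    unfold binomPMF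
    rw [mul_assoc]
    exact mul_le_mul_of_nonneg_left (term_bound (by omega) hj.2 hk hq0 hq)
      (by positivity)
  apply le_trans step1
  rw [← Finset.sum_mul]
  have hsum : ∑ j ∈ (Finset.range (k+1)).filter (fun j => k ≤ 2*j), (k.choose j : ℝ)
      ≤ (2:ℝ)^k := by
    calc ∑ j ∈ (Finset.range (k+1)).filter (fun j => k ≤ 2*j), (k.choose j : ℝ)
        ≤ ∑ j ∈ Finset.range (k+1), (k.choose j : ℝ) :=
          Finset.sum_le_sum_of_subset_of_nonneg (Finset.filter_subset _ _)
            (fun i _ _ => by positivity)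
      _ = (2:ℝ)^k := by
          rw [← Nat.cast_sum, Nat.sum_range_choose]; norm_num
  have hrpow : (0:ℝ) ≤ (q*(1-q)) ^ ((k:ℝ)/2) := Real.rpow_nonneg (by positivity) _
  calc (∑ j ∈ (Finset.range (k+1)).filter (fun j => k ≤ 2*j), (k.choose j : ℝ))
          * (q*(1-q)) ^ ((k:ℝ)/2)
      ≤ (2:ℝ)^k * (q*(1-q)) ^ ((k:ℝ)/2) := mul_le_mul_of_nonneg_right hsum hrpow
    _ = (4*q*(1-q)) ^ ((k:ℝ)/2) := by
        have h4 : (4:ℝ) ^ ((k:ℝ)/2) = (2:ℝ)^k := by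
          have : (4:ℝ) = (2:ℝ) ^ (2:ℝ) := by
            rw [show (2:ℝ) = ((2:ℕ):ℝ) by norm_num, Real.rpow_natCast]; norm_num
          rw [this, ← Real.rpow_natCast (2:ℝ) k, ← Real.rpow_mul (by norm_num)]
          congr 1; ring
        rw [show (4*q*(1-q)) = 4 * (q*(1-q)) by ring,
            Real.mul_rpow (by norm_num) (mul_nonneg hq0 h1q), h4,
            Real.mul_rpow hq0 h1q]

lemma sum_binom (n : ℕ) (a b : ℝ) :
    ∑ k ∈ range (n+1), (n.choose k : ℝ) * a ^ k * b ^ (n - k) = (a+b)^n := by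
  rw [add_pow]
  apply Finset.sum_congr rfl; intro k _; ring

lemma small_bound (m : ℕ) {p : ℝ} (hp0 : 0 < p) (hp1 : p < 1) :
    ∑ k ∈ (range (m+1)).filter (fun k : ℕ => (k:ℝ) < (m:ℝ)*p/2), binomPMF m p k
      ≤ Real.exp (-((m:ℝ)*p)/8) := by
  have h1p : (0:ℝ) ≤ 1 - p := by linarith
  have step1 : ∑ k ∈ (range (m+1)).filter (fun k : ℕ => (k:ℝ) < (m:ℝ)*p/2), binomPMF m p k
      ≤ ∑ k ∈ range (m+1),
          (2:ℝ)^((m:ℝ)*p/2) * ((m.choose k : ℝ) * (p/2)^k * (1-p)^(m-k)) := by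
    apply le_trans (Finset.sum_le_sum ?_)
      (Finset.sum_le_sum_of_subset_of_nonneg (Finset.filter_subset _ _) ?_)
    · intro k hk
      simp only [Finset.mem_filter, Finset.mem_range] at hk
      unfold binomPMF
      have hexp : (0:ℝ) ≤ (m:ℝ)*p/2 - (k:ℝ) := by linarith [hk.2]
      have h1 : (1:ℝ) ≤ (2:ℝ) ^ ((m:ℝ)*p/2 - (k:ℝ)) := by
        simpa using Real.rpow_le_rpow_of_exponent_le one_le_two hexp
      have h2 : (2:ℝ)^((m:ℝ)*p/2 - (k:ℝ)) = (2:ℝ)^((m:ℝ)*p/2) / 2^k := by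
        rw [Real.rpow_sub (by norm_num), Real.rpow_natCast]
      have hpos : (0:ℝ) ≤ (m.choose k : ℝ) * p ^ k * (1 - p) ^ (m - k) := by positivity
      calc (m.choose k : ℝ) * p ^ k * (1 - p) ^ (m - k)
          ≤ ((m.choose k : ℝ) * p ^ k * (1 - p) ^ (m - k)) *
              ((2:ℝ) ^ ((m:ℝ)*p/2 - (k:ℝ))) := le_mul_of_one_le_right hpos h1
        _ = (2:ℝ)^((m:ℝ)*p/2) * ((m.choose k : ℝ) * (p/2)^k * (1-p)^(m-k)) := by
            rw [h2, div_pow]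
            have h2k : ((2:ℝ)^k) ≠ 0 := by positivity
            field_simp
    · intro k _ _
      positivity
  apply le_trans step1
  have hsum : ∑ k ∈ range (m+1),
      (2:ℝ)^((m:ℝ)*p/2) * ((m.choose k : ℝ) * (p/2)^k * (1-p)^(m-k))
      = (2:ℝ)^((m:ℝ)*p/2) * (1 - p/2)^m := by
    rw [← Finset.mul_sum, sum_binom m (p/2) (1-p)]
    ring_nf
  rw [hsum]
  have hA : (2:ℝ)^((m:ℝ)*p/2) = Real.exp ((m:ℝ)*p/2 * Real.log 2) := by
    rw [Real.rpow_def_of_pos (by norm_num)]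
    ring_nf
  have hB : (1 - p/2)^m ≤ Real.exp (-((m:ℝ)*p/2)) := by
    have hle : 1 - p/2 ≤ Real.exp (-(p/2)) := by
      have := Real.add_one_le_exp (-(p/2))
      linarith
    calc (1 - p/2)^m ≤ (Real.exp (-(p/2)))^m :=
          pow_le_pow_left₀ (by linarith) hle m
      _ = Real.exp ((m:ℕ) * (-(p/2))) := (Real.exp_nat_mul _ m).symm
      _ = Real.exp (-((m:ℝ)*p/2)) := by ring_nf
  have hexp2 : (0:ℝ) < Real.exp ((m:ℝ)*p/2 * Real.log 2) := Real.exp_pos _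
  calc (2:ℝ)^((m:ℝ)*p/2) * (1 - p/2)^m
      ≤ Real.exp ((m:ℝ)*p/2 * Real.log 2) * Real.exp (-((m:ℝ)*p/2)) := by
        rw [hA]
        exact mul_le_mul_of_nonneg_left hB (le_of_lt hexp2)
    _ = Real.exp ((m:ℝ)*p/2 * Real.log 2 - (m:ℝ)*p/2) := by rw [← Real.exp_add]; ring_nf
    _ ≤ Real.exp (-((m:ℝ)*p)/8) := by
        apply Real.exp_le_exp.mpr
        have hlog : Real.log 2 ≤ 3/4 := by
          have := Real.log_two_lt_d9
          linarith
        have hmp : (0:ℝ) ≤ (m:ℝ)*p := by positivity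
        nlinarith [mul_le_mul_of_nonneg_left hlog hmp]

lemma large_bound {q : ℝ} (hq0 : 0 ≤ q) (hq : q < 1/2) {x y : ℝ}
    (hy : 0 < y) (hx : y/2 ≤ x) :
    (4*q*(1-q)) ^ (x/2) ≤ Real.exp (-((1-2*q)^2 * y) / (2*(4*q+2))) := by
  set s := (1-2*q)^2 with hs_def
  have hs : 0 < s := by
    have : 0 < 1 - 2*q := by linarith
    positivity
  have hc_eq : 4*q*(1-q) = 1 - s := by rw [hs_def]; ring
  have hx0 : 0 < x := by linarith
  rcases eq_or_lt_of_le (mul_nonneg (by linarith : (0:ℝ) ≤ 4*q) (by linarith : (0:ℝ) ≤ 1-q) : (0:ℝ) ≤ 4*q*(1-q)) with h0 | h0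
  · rw [← h0, Real.zero_rpow (ne_of_gt (by linarith : (0:ℝ) < x/2))]
    exact le_of_lt (Real.exp_pos _)
  · rw [Real.rpow_def_of_pos h0]
    apply Real.exp_le_exp.mpr
    have hlog : Real.log (4*q*(1-q)) ≤ -s := by
      have := Real.log_le_sub_one_of_pos h0
      linarith [hc_eq ▸ this]
    have h1 : Real.log (4*q*(1-q)) * (x/2) ≤ -(s*y/4) := by
      have ha : Real.log (4*q*(1-q)) * (x/2) ≤ (-s) * (x/2) :=
        mul_le_mul_of_nonneg_right hlog (by linarith)
      nlinarith [mul_le_mul_of_nonneg_left hx (le_of_lt hs)]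
    apply le_trans h1
    rw [neg_div, neg_le_neg_iff]
    have h4 : (0:ℝ) < 2*(4*q+2) := by linarith
    calc (s * y) / (2*(4*q+2)) ≤ (s*y)/4 := by
          apply div_le_div_of_nonneg_left (by positivity) (by norm_num) (by linarith)
      _ = s*y/4 := by ring

/-- the two-stage Chernoff bound from the proof of Theorem 5.1
of the paper.  Let `K ~ Binomial(m, p)` and, conditionally on `K`,
`X ~ Binomial(K, q)` with `q < 1/2`.  Then
`P(X ≥ K/2) ≤ exp(−(1−2q)²mp/(2(4q+2))) + exp(−mp/8)`. -/
theorem stmt9 (m : ℕ) (hm : 1 ≤ m) (p q : ℝ) (hp0 : 0 < p) (hp1 : p < 1)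
    (hq0 : 0 ≤ q) (hq : q < 1/2) :
    ∑ k ∈ Finset.range (m+1), binomPMF m p k *
        ∑ j ∈ (Finset.range (k+1)).filter (fun j => k ≤ 2*j), binomPMF k q j
      ≤ Real.exp (-((1 - 2*q)^2 * m * p) / (2 * (4*q + 2)))
          + Real.exp (-((m : ℝ) * p) / 8) := by
  classical
  have hm1 : (1:ℝ) ≤ (m:ℝ) := by exact_mod_cast hm
  have hmp : 0 < (m:ℝ)*p := by positivity
  have hq1 : q ≤ 1 := by linarith
  have h1p : (0:ℝ) ≤ 1 - p := by linarith
  set E1 := Real.exp (-((1 - 2*q)^2 * m * p) / (2 * (4*q + 2))) with hE1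
  set f : ℕ → ℝ := fun k => binomPMF m p k *
      ∑ j ∈ (Finset.range (k+1)).filter (fun j => k ≤ 2*j), binomPMF k q j with hf
  have hinner_le_one : ∀ k : ℕ,
      (∑ j ∈ (Finset.range (k+1)).filter (fun j => k ≤ 2*j), binomPMF k q j) ≤ 1 := by
    intro k
    calc ∑ j ∈ (Finset.range (k+1)).filter (fun j => k ≤ 2*j), binomPMF k q j
        ≤ ∑ j ∈ Finset.range (k+1), binomPMF k q j :=
          Finset.sum_le_sum_of_subset_of_nonneg (Finset.filter_subset _ _)
            (fun j _ _ => binomPMF_nonneg hq0 hq1)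
      _ = 1 := sum_binomPMF k q
  have hinner_nonneg : ∀ k : ℕ, 0 ≤
      ∑ j ∈ (Finset.range (k+1)).filter (fun j => k ≤ 2*j), binomPMF k q j :=
    fun k => Finset.sum_nonneg (fun j _ => binomPMF_nonneg hq0 hq1)
  rw [← Finset.sum_filter_add_sum_filter_not (Finset.range (m+1))
      (fun k : ℕ => (k:ℝ) < (m:ℝ)*p/2) f]
  have hsmall : ∑ k ∈ (Finset.range (m+1)).filter (fun k : ℕ => (k:ℝ) < (m:ℝ)*p/2), f k
      ≤ Real.exp (-((m:ℝ)*p)/8) := by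
    apply le_trans _ (small_bound m hp0 hp1)
    apply Finset.sum_le_sum
    intro k _
    calc f k ≤ binomPMF m p k * 1 :=
          mul_le_mul_of_nonneg_left (hinner_le_one k) (binomPMF_nonneg (le_of_lt hp0) (le_of_lt hp1))
      _ = binomPMF m p k := mul_one _
  have hlarge : ∑ k ∈ (Finset.range (m+1)).filter (fun k : ℕ => ¬ (k:ℝ) < (m:ℝ)*p/2), f k
      ≤ E1 := by
    have hstep : ∀ k ∈ (Finset.range (m+1)).filter (fun k : ℕ => ¬ (k:ℝ) < (m:ℝ)*p/2),
        f k ≤ binomPMF m p k * E1 := by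
      intro k hk
      simp only [Finset.mem_filter, Finset.mem_range, not_lt] at hk
      have hk1 : 1 ≤ k := by
        rcases Nat.eq_zero_or_pos k with h | h
        · exfalso
          subst h
          have h2 := hk.2
          norm_num at h2
          linarith
        · exact h
      have hbig : (4*q*(1-q)) ^ ((k:ℝ)/2)
          ≤ Real.exp (-((1-2*q)^2 * ((m:ℝ)*p)) / (2*(4*q+2))) :=
        large_bound hq0 hq hmp hk.2
      have : (∑ j ∈ (Finset.range (k+1)).filter (fun j => k ≤ 2*j), binomPMF k q j)
          ≤ E1 := by
        apply le_trans (inner_bound hk1 hq0 hq)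
        apply le_trans hbig
        rw [hE1]
        apply le_of_eq
        congr 1
        ring
      exact mul_le_mul_of_nonneg_left this (binomPMF_nonneg (le_of_lt hp0) (le_of_lt hp1))
    calc ∑ k ∈ (Finset.range (m+1)).filter (fun k : ℕ => ¬ (k:ℝ) < (m:ℝ)*p/2), f k
        ≤ ∑ k ∈ (Finset.range (m+1)).filter (fun k : ℕ => ¬ (k:ℝ) < (m:ℝ)*p/2),
            binomPMF m p k * E1 := Finset.sum_le_sum hstep
      _ = (∑ k ∈ (Finset.range (m+1)).filter (fun k : ℕ => ¬ (k:ℝ) < (m:ℝ)*p/2),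
            binomPMF m p k) * E1 := by rw [Finset.sum_mul]
      _ ≤ 1 * E1 := by
          apply mul_le_mul_of_nonneg_right _ (le_of_lt (Real.exp_pos _))
          calc ∑ k ∈ (Finset.range (m+1)).filter (fun k : ℕ => ¬ (k:ℝ) < (m:ℝ)*p/2),
                binomPMF m p k
              ≤ ∑ k ∈ Finset.range (m+1), binomPMF m p k :=
                Finset.sum_le_sum_of_subset_of_nonneg (Finset.filter_subset _ _)
                  (fun j _ _ => binomPMF_nonneg (le_of_lt hp0) (le_of_lt hp1))
            _ = 1 := sum_binomPMF m p
      _ = E1 := one_mul _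
  linarith [hsmall, hlarge]
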